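/- For every n ≥ 1 there exist i ≤ j with j − i + 1 ≥ n such that the factor t[i..j] of the Thue-Morse sequence t has period n but no period n' with n' < n. -/
import Mathlib


/-- `n` is a period of the factor `x[i..j]` of the infinite word `x`:
`x t = x (t+n)` for all `i ≤ t ≤ j - n`. -/
def Period {A : Type*} (x : ℕ → A) (i j n : ℕ) : Prop :=
  ∀ t, i ≤ t → t + n ≤ j → x t = x (t + n)

/-- `n` is a least period of `x`: some nonempty factor `x[i..j]` has
minimal period `n`. -/
def LeastPeriod {A : Type*} (x : ℕ → A) (n : ℕ) : Prop :=
  ∃ i j, i ≤ j ∧ Period x i j n ∧ ∀ m, 0 < m → m < n → ¬ Period x i j m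

/-- The Thue-Morse sequence: sum of binary digits of `n`, mod 2. -/
def thueMorse (n : ℕ) : ℕ := (Nat.digits 2 n).sum % 2

noncomputable def N (n : ℕ) : ZMod 2 := ((Nat.digits 2 n).sum : ZMod 2)

lemma N_eq_tm (x : ℕ) : N x = (thueMorse x : ZMod 2) := by
  simp [N, thueMorse, ZMod.natCast_mod]

lemma tm_lt (x : ℕ) : thueMorse x < 2 := Nat.mod_lt _ (by norm_num)

lemma N_eq_iff {x y : ℕ} : thueMorse x = thueMorse y ↔ N x = N y := by
  constructor
  · intro h; rw [N_eq_tm, N_eq_tm, h]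
  · intro h
    rw [N_eq_tm, N_eq_tm] at h
    have hx := tm_lt x; have hy := tm_lt y
    interval_cases h1 : thueMorse x <;> interval_cases h2 : thueMorse y <;>
      simp_all <;> exact absurd h (by decide)

lemma N_even (k : ℕ) : N (2*k) = N k := by
  rcases Nat.eq_zero_or_pos k with h|h
  · simp [h]
  · have : Nat.digits 2 (2*k) = (2*k) % 2 :: Nat.digits 2 ((2*k)/2) :=
      Nat.digits_def' (by norm_num) (by omega)
    simp [N, this, Nat.mul_div_cancel_left _ (by norm_num : 0 < 2)]

lemma N_odd (k : ℕ) : N (2*k+1) = N k + 1 := by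
  have : Nat.digits 2 (2*k+1) = (2*k+1) % 2 :: Nat.digits 2 ((2*k+1)/2) :=
    Nat.digits_def' (by norm_num) (by omega)
  have h2 : (2*k+1) % 2 = 1 := by omega
  have h3 : (2*k+1) / 2 = k := by omega
  rw [N, this, h2, h3, List.sum_cons]
  push_cast [N]
  ring

-- ZMod 2 helpers
lemma zne {x y : ZMod 2} (h : x ≠ y) : x = y + 1 := by revert h; revert x y; decide
lemma zflip {x y : ZMod 2} (h : x = y + 1) : y = x + 1 := by revert h; revert x y; decide
lemma zself (x : ZMod 2) : ¬ x = x + 1 := by revert x; decide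
lemma zself' (x : ZMod 2) : ¬ x + 1 = x := by revert x; decide
lemma zpp (x : ZMod 2) : x + 1 + 1 = x := by revert x; decide

lemma no_triple (v : ℕ) : ¬ (N v = N (v+1) ∧ N (v+1) = N (v+2)) := by
  rintro ⟨A, B⟩
  rcases Nat.even_or_odd v with he|ho
  · obtain ⟨u, hu⟩ := he
    have hv : v = 2*u := by omega
    rw [hv] at A
    rw [N_even, show 2*u+1 = 2*u+1 from rfl, N_odd] at A
    exact zself _ A
  · obtain ⟨u, hu⟩ := ho
    have h1 : v + 1 = 2*(u+1) := by omega
    have h2 : v + 2 = 2*(u+1)+1 := by omega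
    rw [h1, h2, N_even, N_odd] at B
    exact zself _ B

lemma kernel {u q : ℕ}
    (h1 : N u = N (u+q) + 1) (h2 : N u + 1 = N (u+q+1))
    (h3 : N (u+1) = N (u+1+q) + 1) (h4 : N (u+1) + 1 = N (u+1+q+1)) : False := by
  rw [show u+1+q = u+q+1 by omega] at h3
  rw [show u+1+q+1 = u+q+2 by omega] at h4
  apply no_triple (u+q)
  constructor
  · rw [zflip h1, h2]
  · rw [zflip h3, h4]

section extract
variable {i j q u : ℕ}
local notation "T" => thueMorse

lemma perE (h : Period T i j (2*q)) (h1 : i ≤ 2*u) (h2 : 2*u + 2*q ≤ j) :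
    N u = N (u+q) := by
  have hh := N_eq_iff.1 (h (2*u) h1 h2)
  rwa [show 2*u + 2*q = 2*(u+q) by ring, N_even, N_even] at hh

lemma perE' (h : Period T i j (2*q)) (h1 : i ≤ 2*u+1) (h2 : 2*u+1 + 2*q ≤ j) :
    N u = N (u+q) := by
  have hh := N_eq_iff.1 (h (2*u+1) h1 h2)
  rw [show 2*u+1 + 2*q = 2*(u+q)+1 by ring, N_odd, N_odd] at hh
  exact add_right_cancel hh

lemma perO (h : Period T i j (2*q+1)) (h1 : i ≤ 2*u) (h2 : 2*u + (2*q+1) ≤ j) :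
    N u = N (u+q) + 1 := by
  have hh := N_eq_iff.1 (h (2*u) h1 h2)
  rwa [show 2*u + (2*q+1) = 2*(u+q)+1 by ring, N_even, N_odd] at hh

lemma perO' (h : Period T i j (2*q+1)) (h1 : i ≤ 2*u+1) (h2 : 2*u+1 + (2*q+1) ≤ j) :
    N u + 1 = N (u+q+1) := by
  have hh := N_eq_iff.1 (h (2*u+1) h1 h2)
  rwa [show 2*u+1 + (2*q+1) = 2*(u+q+1) by ring, N_odd, N_even] at hh

end extract

/-- factor t[a..a+n] (length n+1) has least period exactly n -/
def SW (n a : ℕ) : Prop :=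
  N a = N (a+n) ∧ ∀ p, 0 < p → p < n → ¬ Period thueMorse a (a+n) p

/-- factor t[b..b+L] (length L+1) is unbordered -/
def UW (L b : ℕ) : Prop :=
  ∀ p, 0 < p → p ≤ L → ¬ Period thueMorse b (b+L) p

lemma UW_border {L b : ℕ} (hL : 1 ≤ L) (h : UW L b) : N (b+L) = N b + 1 := by
  apply zflip; apply zne
  intro he
  exact h L hL le_rfl (fun s hs1 hs2 => by
    have : s = b := by omega
    subst this; exact N_eq_iff.2 he)

lemma AA0 {m a : ℕ} (hm : 1 ≤ m) (h : SW m a) : SW (2*m) (2*a) := by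
  obtain ⟨heq, hnp⟩ := h
  constructor
  · rw [show 2*a + 2*m = 2*(a+m) by ring, N_even, N_even]; exact heq
  · intro p hp0 hplt hper
    rcases Nat.even_or_odd p with ⟨q, hq⟩|⟨q, hq⟩
    · have hq' : p = 2*q := by omega
      rw [hq'] at hper
      refine hnp q (by omega) (by omega) (fun s hs1 hs2 => ?_)
      exact N_eq_iff.2 (perE hper (by omega) (by omega))
    · have hq' : p = 2*q+1 := by omega
      rw [hq'] at hper
      by_cases hc : q + 2 ≤ m
      · exact kernel (perO hper (u := a) (by omega) (by omega))
          (perO' hper (u := a) (by omega) (by omega))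
          (perO hper (u := a+1) (by omega) (by omega))
          (perO' hper (u := a+1) (by omega) (by omega))
      · have h1 := perO' hper (u := a) (by omega) (by omega)
        rw [show a+q+1 = a+m by omega, ← heq] at h1
        exact zself' _ h1

lemma AA1 {m a : ℕ} (hm : 1 ≤ m) (h : SW m a) : SW (2*m) (2*a+1) := by
  obtain ⟨heq, hnp⟩ := h
  constructor
  · rw [show 2*a+1 + 2*m = 2*(a+m)+1 by ring, N_odd, N_odd, heq]
  · intro p hp0 hplt hper
    rcases Nat.even_or_odd p with ⟨q, hq⟩|⟨q, hq⟩
    · have hq' : p = 2*q := by omega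
      rw [hq'] at hper
      refine hnp q (by omega) (by omega) (fun s hs1 hs2 => ?_)
      apply N_eq_iff.2
      rcases Nat.lt_or_ge a s with hs|hs
      · exact perE hper (u := s) (by omega) (by omega)
      · have hsa : s = a := by omega
        subst hsa
        exact perE' hper (u := s) (by omega) (by omega)
    · have hq' : p = 2*q+1 := by omega
      rw [hq'] at hper
      rcases (show q + 3 ≤ m ∨ q + 2 = m ∨ q + 1 = m by omega) with hc|hc|hc
      · exact kernel (perO hper (u := a+1) (by omega) (by omega))
          (perO' hper (u := a+1) (by omega) (by omega))
          (perO hper (u := a+2) (by omega) (by omega))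
          (perO' hper (u := a+2) (by omega) (by omega))
      · -- q + 2 = m
        have C1 := perO' hper (u := a) (by omega) (by omega)
        have C2 := perO hper (u := a+1) (by omega) (by omega)
        have C3 := perO' hper (u := a+1) (by omega) (by omega)
        -- C1 : N a + 1 = N (a+q+1), C2 : N (a+1) = N (a+1+q) + 1, C3 : N (a+1) + 1 = N (a+1+q+1)
        rw [show a+1+q = a+q+1 by omega] at C2
        rw [show a+1+q+1 = a+m by omega, ← heq] at C3
        -- C2 : N (a+1) = N(a+q+1)+1 = (N a + 1) + 1 = N a
        rw [← C1, zpp] at C2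
        -- C3 : N (a+1) + 1 = N a
        rw [C2] at C3
        exact zself' _ C3
      · have h1 := perO' hper (u := a) (by omega) (by omega)
        rw [show a+q+1 = a+m by omega, ← heq] at h1
        exact zself' _ h1

lemma notboth {L a : ℕ} (hL : 2 ≤ L) (h : SW L a)
    (hα : N a = N (a+1)) (hβ : N a = N (a+(L-1))) : False := by
  obtain ⟨heq, hnp⟩ := h
  refine hnp (L-1) (by omega) (by omega) (fun s hs1 hs2 => ?_)
  apply N_eq_iff.2
  rcases (show s = a ∨ s = a + 1 by omega) with hs|hs
  · subst hs; rw [← hβ]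
  · subst hs
    rw [show a+1+(L-1) = a+L by omega, ← heq, ← hα]

lemma AB {L a : ℕ} (hL : 2 ≤ L) (h : SW L a) : UW (2*L-1) (2*a+1) := by
  obtain ⟨heq, hnp⟩ := h
  intro p hp0 hple hper
  rw [show 2*a+1 + (2*L-1) = 2*a+2*L by omega] at hper
  rcases Nat.even_or_odd p with ⟨q, hq⟩|⟨q, hq⟩
  · have hq' : p = 2*q := by omega
    rw [hq'] at hper
    refine hnp q (by omega) (by omega) (fun s hs1 hs2 => ?_)
    apply N_eq_iff.2
    rcases Nat.lt_or_ge a s with hs|hs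
    · exact perE hper (u := s) (by omega) (by omega)
    · have hsa : s = a := by omega
      subst hsa
      exact perE' hper (u := s) (by omega) (by omega)
  · have hq' : p = 2*q+1 := by omega
    rw [hq'] at hper
    rcases (show q + 3 ≤ L ∨ q + 2 = L ∨ q + 1 = L by omega) with hc|hc|hc
    · exact kernel (perO hper (u := a+1) (by omega) (by omega))
        (perO' hper (u := a+1) (by omega) (by omega))
        (perO hper (u := a+2) (by omega) (by omega))
        (perO' hper (u := a+2) (by omega) (by omega))
    · have C1 := perO' hper (u := a) (by omega) (by omega)
      have C2 := perO hper (u := a+1) (by omega) (by omega)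
      have C3 := perO' hper (u := a+1) (by omega) (by omega)
      rw [show a+1+q = a+q+1 by omega] at C2
      rw [show a+1+q+1 = a+L by omega, ← heq] at C3
      rw [← C1, zpp] at C2
      rw [C2] at C3
      exact zself' _ C3
    · have h1 := perO' hper (u := a) (by omega) (by omega)
      rw [show a+q+1 = a+L by omega, ← heq] at h1
      exact zself' _ h1

lemma BA0 {L b : ℕ} (hL : 1 ≤ L) (h : UW L b)
    (hg : N b = N (b+1) → N b = N (b+(L-1))) : SW (2*L+1) (2*b) := by
  have hne := UW_border hL h
  constructor
  · rw [show 2*b + (2*L+1) = 2*(b+L)+1 by ring, N_even, N_odd, hne, zpp]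
  · intro p hp0 hplt hper
    rcases Nat.even_or_odd p with ⟨q, hq⟩|⟨q, hq⟩
    · have hq' : p = 2*q := by omega
      rw [hq'] at hper
      refine h q (by omega) (by omega) (fun s hs1 hs2 => ?_)
      exact N_eq_iff.2 (perE hper (u := s) (by omega) (by omega))
    · have hq' : p = 2*q+1 := by omega
      rw [hq'] at hper
      rcases (show q + 2 ≤ L ∨ q + 1 = L by omega) with hc|hc
      · exact kernel (perO hper (u := b) (by omega) (by omega))
          (perO' hper (u := b) (by omega) (by omega))
          (perO hper (u := b+1) (by omega) (by omega))
          (perO' hper (u := b+1) (by omega) (by omega))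
      · -- q+1 = L : D1 from s = 2b, D2 from s = 2b+2
        have D1 := perO hper (u := b) (by omega) (by omega)
        have D2 := perO hper (u := b+1) (by omega) (by omega)
        -- D1 : N b = N (b+q) + 1 with b+q = b+(L-1)
        rw [show b+q = b+(L-1) by omega] at D1
        -- D2 : N (b+1) = N (b+1+q) + 1 with b+1+q = b+L
        rw [show b+1+q = b+L by omega, hne, zpp] at D2
        -- D2 : N (b+1) = N b, so hg applies
        have hδ := hg D2.symm
        rw [← hδ] at D1
        exact zself _ D1

lemma BA1 {L b : ℕ} (hL : 2 ≤ L) (h : UW L b)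
    (hg : (N b = N (b+1)) ↔ (N b = N (b+(L-1)))) :
    SW (2*L-1) (2*b+1) ∧ (N (2*b+1) = N (2*b+2) ∨ N (2*b+1) = N (2*b+2*L-1)) := by
  have hne := UW_border (by omega) h
  constructor
  · constructor
    · rw [show 2*b+1 + (2*L-1) = 2*(b+L) by omega, N_even, hne]
      rw [show 2*b+1 = 2*b+1 from rfl, N_odd]
    · intro p hp0 hplt hper
      rw [show 2*b+1 + (2*L-1) = 2*b+2*L by omega] at hper
      rcases Nat.even_or_odd p with ⟨q, hq⟩|⟨q, hq⟩
      · have hq' : p = 2*q := by omega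
        rw [hq'] at hper
        refine h q (by omega) (by omega) (fun s hs1 hs2 => ?_)
        apply N_eq_iff.2
        rcases Nat.lt_or_ge b s with hs|hs
        · exact perE hper (u := s) (by omega) (by omega)
        · have hsa : s = b := by omega
          subst hsa
          exact perE' hper (u := s) (by omega) (by omega)
      · have hq' : p = 2*q+1 := by omega
        rw [hq'] at hper
        rcases (show q + 3 ≤ L ∨ q + 2 = L by omega) with hc|hc
        · exact kernel (perO hper (u := b+1) (by omega) (by omega))
            (perO' hper (u := b+1) (by omega) (by omega))
            (perO hper (u := b+2) (by omega) (by omega))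
            (perO' hper (u := b+2) (by omega) (by omega))
        · -- q+2 = L
          have G1 := perO' hper (u := b) (by omega) (by omega)
          have G3 := perO' hper (u := b+1) (by omega) (by omega)
          -- G1 : N b + 1 = N (b+q+1) = N (b+(L-1))
          rw [show b+q+1 = b+(L-1) by omega] at G1
          -- G3 : N (b+1) + 1 = N (b+1+q+1) = N (b+L) = N b + 1
          rw [show b+1+q+1 = b+L by omega, hne] at G3
          have hγ : N b = N (b+1) := (add_right_cancel G3).symm
          have hδ := hg.1 hγ
          rw [← hδ] at G1
          exact zself' _ G1
  · by_cases hγ : N b = N (b+1)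
    · right
      have hδ := hg.1 hγ
      rw [show 2*b+2*L-1 = 2*(b+(L-1))+1 by omega, N_odd, N_odd, hδ]
    · left
      rw [show 2*b+2 = 2*(b+1) by ring, N_even, N_odd, zne hγ, zpp]

lemma BB0 {L b : ℕ} (hL : 1 ≤ L) (h : UW L b)
    (hδ : N b = N (b+(L-1))) : UW (2*L) (2*b) := by
  intro p hp0 hple hper
  rw [show 2*b + 2*L = 2*b+2*L from rfl] at hper
  rcases Nat.even_or_odd p with ⟨q, hq⟩|⟨q, hq⟩
  · have hq' : p = 2*q := by omega
    rw [hq'] at hper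
    refine h q (by omega) (by omega) (fun s hs1 hs2 => ?_)
    exact N_eq_iff.2 (perE hper (u := s) (by omega) (by omega))
  · have hq' : p = 2*q+1 := by omega
    rw [hq'] at hper
    rcases (show q + 2 ≤ L ∨ q + 1 = L by omega) with hc|hc
    · exact kernel (perO hper (u := b) (by omega) (by omega))
        (perO' hper (u := b) (by omega) (by omega))
        (perO hper (u := b+1) (by omega) (by omega))
        (perO' hper (u := b+1) (by omega) (by omega))
    · have D1 := perO hper (u := b) (by omega) (by omega)
      rw [show b+q = b+(L-1) by omega, ← hδ] at D1
      exact zself _ D1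

lemma BB1 {L b : ℕ} (hL : 2 ≤ L) (h : UW L b)
    (hγ : ¬ N b = N (b+1)) (hδ : ¬ N b = N (b+(L-1))) : UW (2*L) (2*b+1) := by
  have hne := UW_border (by omega) h
  intro p hp0 hple hper
  rw [show 2*b+1 + 2*L = 2*b+2*L+1 by omega] at hper
  rcases Nat.even_or_odd p with ⟨q, hq⟩|⟨q, hq⟩
  · have hq' : p = 2*q := by omega
    rw [hq'] at hper
    refine h q (by omega) (by omega) (fun s hs1 hs2 => ?_)
    apply N_eq_iff.2
    rcases Nat.lt_or_ge b s with hs|hs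
    · exact perE hper (u := s) (by omega) (by omega)
    · have hsa : s = b := by omega
      subst hsa
      exact perE' hper (u := s) (by omega) (by omega)
  · have hq' : p = 2*q+1 := by omega
    rw [hq'] at hper
    rcases (show q + 3 ≤ L ∨ q + 2 = L ∨ q + 1 = L by omega) with hc|hc|hc
    · exact kernel (perO hper (u := b+1) (by omega) (by omega))
        (perO' hper (u := b+1) (by omega) (by omega))
        (perO hper (u := b+2) (by omega) (by omega))
        (perO' hper (u := b+2) (by omega) (by omega))
    · -- q+2 = L : s = 2b+2
      have D := perO hper (u := b+1) (by omega) (by omega)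
      rw [show b+1+q = b+(L-1) by omega, zflip (zne hδ), zpp] at D
      exact hγ D.symm
    · -- q+1 = L : s = 2b+2
      have D := perO hper (u := b+1) (by omega) (by omega)
      rw [show b+1+q = b+L by omega, hne, zpp] at D
      exact hγ D.symm

lemma PG {m a : ℕ} (hm : 2 ≤ m) (h : SW m a) :
    ∃ c, SW (2*m) c ∧ (N c = N (c+1) ∨ N c = N (c+(2*m-1))) := by
  by_cases hβ : N a = N (a+(m-1))
  · refine ⟨2*a+1, AA1 (by omega) h, Or.inl ?_⟩
    have hα : ¬ N a = N (a+1) := fun hα => notboth hm h hα hβ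
    rw [show 2*a+1+1 = 2*(a+1) by ring, N_even, N_odd, zne hα, zpp]
  · refine ⟨2*a, AA0 (by omega) h, Or.inr ?_⟩
    rw [show 2*a+(2*m-1) = 2*(a+(m-1))+1 by omega, N_odd, N_even, zne hβ]

lemma N0 : N 0 = 0 := by simp [N]
lemma N1 : N 1 = 1 := by
  have := N_odd 0
  norm_num at this
  rw [this, N0]; ring
lemma N2 : N 2 = 1 := by
  have := N_even 1
  norm_num at this
  rw [this, N1]
lemma sw1 : SW 1 1 := by
  constructor
  · show N 1 = N 2
    rw [N1, N2]
  · intro p hp0 hplt; omega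
def QSgood (J : ℕ) : Prop :=
  ∃ b, UW J b ∧ ((N b = N (b+1)) ↔ (N b = N (b+(J-1))))
def PGgood (n : ℕ) : Prop :=
  ∃ a, SW n a ∧ (N a = N (a+1) ∨ N a = N (a+(n-1)))

lemma qs2base : QSgood 2 := by
  refine ⟨0, ?_, by norm_num⟩
  intro p hp0 hple hper
  interval_cases p
  · have := N_eq_iff.1 (hper 0 (by omega) (by omega))
    rw [N0] at this
    have h1 : N (0+1) = 1 := N1
    rw [h1] at this
    exact absurd this (by decide)
  · have := N_eq_iff.1 (hper 0 (by omega) (by omega))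
    rw [N0] at this
    have h1 : N (0+2) = 1 := N2
    rw [h1] at this
    exact absurd this (by decide)

theorem master : ∀ k, (1 ≤ k → ∃ a, SW k a) ∧
    (2 ≤ k → ¬ 3 ∣ k → QSgood k) ∧
    (3 ≤ k → (k % 2 = 0 ∨ ¬ 3 ∣ ((k+1)/2)) → PGgood k) := by
  intro k
  induction k using Nat.strong_induction_on with
  | _ k IH =>
  refine ⟨?_, ?_, ?_⟩
  · -- existence of SW witnesses
    intro hk1
    rcases (show k = 1 ∨ 2 ≤ k by omega) with h|h
    · subst h; exact ⟨1, sw1⟩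
    rcases Nat.even_or_odd k with ⟨m, hm⟩|⟨r, hr⟩
    · -- k = 2m, m ≥ 1
      obtain ⟨a, ha⟩ := (IH m (by omega)).1 (by omega)
      exact ⟨2*a, by rw [show k = 2*m by omega]; exact AA0 (by omega) ha⟩
    · -- k = 2r+1, r ≥ 1
      by_cases h3 : 3 ∣ r
      · obtain ⟨b, hU, hg⟩ := (IH (r+1) (by omega)).2.1 (by omega) (by omega)
        obtain ⟨hsw, -⟩ := BA1 (L := r+1) (by omega) hU hg
        exact ⟨2*b+1, by rw [show k = 2*(r+1)-1 by omega]; exact hsw⟩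
      · rcases (show r = 1 ∨ 2 ≤ r by omega) with hr1|hr2
        · obtain ⟨b, hU, hg⟩ := (IH 2 (by omega)).2.1 (by omega) (by omega)
          obtain ⟨hsw, -⟩ := BA1 (L := 2) (by omega) hU hg
          exact ⟨2*b+1, by rw [show k = 2*2-1 by omega]; exact hsw⟩
        · obtain ⟨b, hU, hg⟩ := (IH r (by omega)).2.1 (by omega) h3
          refine ⟨2*b, ?_⟩
          rw [show k = 2*r+1 by omega]
          exact BA0 (by omega) hU (fun hγ => hg.1 hγ)
  · -- QSgood
    intro hk2 h3k
    rcases (show k = 2 ∨ 4 ≤ k by omega) with h|h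
    · subst h; exact qs2base
    rcases Nat.even_or_odd k with ⟨J, hJ⟩|⟨r, hr⟩
    · -- k = 2J, J ≥ 2
      have hJ2 : 2 ≤ J := by omega
      obtain ⟨b, hU, hg⟩ := (IH J (by omega)).2.1 (by omega) (by omega)
      by_cases hγ : N b = N (b+1)
      · have hδ := hg.1 hγ
        refine ⟨2*b, by rw [show k = 2*J by omega]; exact BB0 (by omega) hU hδ, ?_⟩
        refine iff_of_false ?_ ?_
        · intro hh
          rw [show (2*b+1 : ℕ) = 2*b+1 from rfl, N_odd, N_even] at hh
          exact zself _ hh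
        · intro hh
          rw [show 2*b + (k-1) = 2*(b+(J-1))+1 by omega, N_even, N_odd, ← hδ] at hh
          exact zself _ hh
      · have hδ : ¬ N b = N (b+(J-1)) := fun hd => hγ (hg.2 hd)
        have hne := UW_border (by omega) hU
        refine ⟨2*b+1, by rw [show k = 2*J by omega]; exact BB1 (by omega) hU hγ hδ, ?_⟩
        refine iff_of_true ?_ ?_
        · rw [show 2*b+1+1 = 2*(b+1) by ring, N_even, N_odd, zne hγ, zpp]
        · rw [show 2*b+1 + (k-1) = 2*(b+J) by omega, N_even, hne, N_odd]
    · -- k odd ≥ 5, k = 2r+1, set L = r+1, k = 2L-1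
      have hL3 : 3 ≤ r+1 := by omega
      obtain ⟨a, hsw, hst⟩ := (IH (r+1) (by omega)).2.2 (by omega) (by omega)
      have hUW := AB (L := r+1) (by omega) hsw
      refine ⟨2*a+1, by rw [show k = 2*(r+1)-1 by omega]; exact hUW, ?_⟩
      rcases hst with hα|hβ
      · have hβ : ¬ N a = N (a+(r+1-1)) := fun hb => notboth (by omega) hsw hα hb
        refine iff_of_false ?_ ?_
        · intro hh
          rw [show 2*a+1+1 = 2*(a+1) by ring, N_odd, N_even, ← hα] at hh
          exact zself' _ hh
        · intro hh
          rw [show 2*a+1 + (k-1) = 2*(a+r)+1 by omega, N_odd, N_odd] at hh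
          have := add_right_cancel hh
          rw [show (a+r : ℕ) = a+(r+1-1) by omega] at this
          exact hβ this
      · have hα : ¬ N a = N (a+1) := fun ha => notboth (by omega) hsw ha hβ
        refine iff_of_true ?_ ?_
        · rw [show 2*a+1+1 = 2*(a+1) by ring, N_odd, N_even, zne hα, zpp]
        · rw [show 2*a+1 + (k-1) = 2*(a+r)+1 by omega, N_odd, N_odd,
            show (a+r : ℕ) = a+(r+1-1) by omega, hβ]
  · -- PGgood
    intro hk3 hguard
    rcases Nat.even_or_odd k with ⟨m, hm⟩|⟨r, hr⟩
    · have hm2 : 2 ≤ m := by omega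
      obtain ⟨a, ha⟩ := (IH m (by omega)).1 (by omega)
      obtain ⟨c, hc1, hc2⟩ := PG hm2 ha
      refine ⟨c, by rw [show k = 2*m by omega]; exact hc1, ?_⟩
      rw [show k - 1 = 2*m-1 by omega]
      exact hc2
    · -- k odd, guard gives ¬ 3 ∣ ((k+1)/2) = r+1
      have hg3 : ¬ 3 ∣ (r+1) := by
        rcases hguard with h|h
        · omega
        · intro hd; exact h (by omega)
      obtain ⟨b, hU, hg⟩ := (IH (r+1) (by omega)).2.1 (by omega) hg3
      obtain ⟨hsw, hstate⟩ := BA1 (L := r+1) (by omega) hU hg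
      refine ⟨2*b+1, by rw [show k = 2*(r+1)-1 by omega]; exact hsw, ?_⟩
      rcases hstate with h|h
      · left; rw [show 2*b+1+1 = 2*b+2 by omega]; exact h
      · right; rw [show 2*b+1+(k-1) = 2*b+2*(r+1)-1 by omega]; exact h

theorem thueMorse_long_factor_least_period (n : ℕ) (hn : 1 ≤ n) :
    ∃ i j, i ≤ j ∧ n ≤ j - i + 1 ∧ Period thueMorse i j n ∧
      ∀ n', 0 < n' → n' < n → ¬ Period thueMorse i j n' := by
  obtain ⟨a, h1, h2⟩ := (master n).1 hn
  refine ⟨a, a + n, by omega, by omega, ?_, fun n' h0 hlt => h2 n' h0 hlt⟩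
  intro s hs1 hs2
  have : s = a := by omega
  subst this
  exact N_eq_iff.2 h1
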